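/- arXiv:2301.01985 — 3 statements merged into one kernel-verified Lean document; each statement's English description precedes it below -/
import Mathlib

section
/- Let K be a field of characteristic 0 and let L = ∑_{i=0}^{J} a_i(k) σ^i with a_i ∈ K[k], a_J ≠ 0, d = deg(L) ≥ 0, L nondegenerated, and suppose L is power-partible with respect to γ ∈ K, i.e. a_i(γ+k) = (−1)^d a_{J−i}(γ−k−J) for i = 0, …, ⌊J/2⌋. Let α_s ∈ K \ {0} for each s ∈ ℕ and set x_s(k) = α_s · (k − γ + J/2)^s. Then for every positive integer m there exist scalars u_i, v_j ∈ K such that (k−γ)^m = ∑_{0 ≤ i < d, i ≡ m (mod 2)} u_i (k−γ)^i + ∑_{0 ≤ j ≤ m−d, d+j ≡ m (mod 2)} v_j · L*(x_j(k)) as polynomials in K[k]. -/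
/-!
Write `Δ` for the forward difference and `y(k) = x(k - J)`. Newton's formula
`y(k + j) = ∑ binom(j, ℓ) Δ^ℓ y(k)` gives `L*(x) = ∑_ℓ b_ℓ Δ^ℓ y`, so `L*` raises degrees by at
most `d` and the coefficient of `k^(d+s)` in `L*(x)`, for `deg x ≤ s`, is `f(s)` times that of
`k^s` in `x`. Power-partibility reads `a_{J-i}(2γ - J - k) = (-1)^d a_i(k)`; reindexing
`i ↦ J - i` in `L*` shows that `L*` turns symmetry of `x` about `γ - J/2` into symmetry about
`γ` with the extra sign `(-1)^d`, so `L*(x_s)` is even or odd about `γ` according to the parity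
of `d + s`. For `m ≥ d`, removing from `(k - γ)^m` the multiple of `L*(x_{m-d})` with the same
leading coefficient (possible because `f(m - d) α_{m-d} ≠ 0`) leaves a polynomial of degree
`< m` with the parity of `m` about `γ`, that is, a combination of the `(k - γ)^i` with `i < m`,
`i ≡ m (mod 2)`; strong induction on `m` concludes.
-/

open Polynomial Finset

namespace Polynomial

section ForwardDifference

variable {R : Type*} [CommRing R]

noncomputable def forwardDiff : Module.End R R[X] := taylor (1 : R) - 1

lemma forwardDiff_apply (p : R[X]) : forwardDiff p = taylor 1 p - p := rfl

lemma taylor_natCast_eq_sum_forwardDiff (n : ℕ) (p : R[X]) :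
    taylor (n : R) p = ∑ ℓ ∈ range (n + 1), (n.choose ℓ : R) • (forwardDiff ^ ℓ) p := by
  have hpow : taylor (n : R) = (taylor 1 : Module.End R R[X]) ^ n := by
    induction n with
    | zero => rw [Nat.cast_zero, pow_zero, taylor_zero']; rfl
    | succ n ih =>
      refine LinearMap.ext fun q => ?_
      rw [pow_succ', Module.End.mul_apply, ← ih, taylor_taylor, Nat.cast_succ, add_comm]
  have hsplit : (taylor 1 : Module.End R R[X]) = forwardDiff + 1 := (sub_add_cancel _ _).symm
  rw [hpow, hsplit, (Commute.one_right _).add_pow, LinearMap.sum_apply]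
  simp only [one_pow, mul_one, Module.End.mul_apply, Module.End.natCast_apply, map_nsmul,
    Nat.cast_smul_eq_nsmul]

variable {p : R[X]} {s ℓ : ℕ}

lemma coeff_taylor_of_natDegree_le (r : R) (h : p.natDegree ≤ s) :
    (taylor r p).coeff s = p.coeff s := by
  have hconst : (hasseDeriv s p).natDegree = 0 := by
    have := natDegree_hasseDeriv_le p s
    omega
  rw [taylor_coeff, eq_C_of_natDegree_eq_zero hconst, eval_C, hasseDeriv_coeff, zero_add,
    Nat.choose_self, Nat.cast_one, one_mul]

lemma natDegree_forwardDiff_le (h : p.natDegree ≤ s + 1) : (forwardDiff p).natDegree ≤ s :=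
  natDegree_le_iff_coeff_eq_zero.2 fun n hn => by
    rw [forwardDiff_apply, coeff_sub, coeff_taylor_of_natDegree_le 1 (by omega), sub_self]

lemma coeff_forwardDiff_of_natDegree_le (h : p.natDegree ≤ s + 1) :
    (forwardDiff p).coeff s = (s + 1) * p.coeff (s + 1) := by
  have hlin : (hasseDeriv s p).natDegree ≤ 1 := by
    have := natDegree_hasseDeriv_le p s
    omega
  rw [forwardDiff_apply, coeff_sub, taylor_coeff, eq_X_add_C_of_natDegree_le_one hlin]
  simp [hasseDeriv_coeff, add_comm 1 s]

lemma natDegree_forwardDiff_pow_le_and_coeff (h : p.natDegree ≤ s) (hℓ : ℓ ≤ s) :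
    ((forwardDiff ^ ℓ) p).natDegree ≤ s - ℓ ∧
      ((forwardDiff ^ ℓ) p).coeff (s - ℓ) = s.descFactorial ℓ * p.coeff s := by
  induction ℓ with
  | zero => simpa using h
  | succ ℓ ih =>
    obtain ⟨hdeg, hcoeff⟩ := ih (by omega)
    have hs : s - ℓ = s - (ℓ + 1) + 1 := by omega
    rw [hs] at hdeg hcoeff
    rw [pow_succ', Module.End.mul_apply]
    refine ⟨natDegree_forwardDiff_le hdeg, ?_⟩
    rw [coeff_forwardDiff_of_natDegree_le hdeg, hcoeff, Nat.descFactorial_succ, hs]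
    push_cast
    ring

lemma forwardDiff_pow_eq_zero (h : p.natDegree ≤ s) (hℓ : s < ℓ) :
    (forwardDiff ^ ℓ) p = 0 := by
  obtain ⟨c, hc⟩ : ∃ c, (forwardDiff ^ s) p = C c := ⟨_, eq_C_of_natDegree_eq_zero
    (by simpa using (natDegree_forwardDiff_pow_le_and_coeff h le_rfl).1)⟩
  obtain ⟨t, rfl⟩ := Nat.exists_eq_add_of_lt hℓ
  rw [show s + t + 1 = t + 1 + s by omega, pow_add, Module.End.mul_apply, hc, pow_succ,
    Module.End.mul_apply, forwardDiff_apply, taylor_C, sub_self, map_zero]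

end ForwardDifference

section RecurrenceAdjoint

variable {R : Type*} [CommRing R] (J : ℕ) (a : ℕ → R[X])

noncomputable def recurrenceAdjoint (x : R[X]) : R[X] :=
  ∑ i ∈ range (J + 1), (a i).comp (X - (i : R[X])) * x.comp (X - (i : R[X]))

noncomputable def recurrenceAdjointCoeff (ℓ : ℕ) : R[X] :=
  ∑ j ∈ Icc ℓ J, (j.choose ℓ : R) • (a (J - j)).comp (X + C ((j : R) - (J : R)))

noncomputable def indicial (d s : ℕ) : R :=
  ∑ ℓ ∈ range (J + 1),
    (recurrenceAdjointCoeff J a ℓ).coeff (d + ℓ) * (s.descFactorial ℓ : R)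

lemma recurrenceAdjoint_eq_sum_forwardDiff (x : R[X]) :
    recurrenceAdjoint J a x = ∑ ℓ ∈ range (J + 1),
      recurrenceAdjointCoeff J a ℓ * (forwardDiff ^ ℓ) (taylor (-(J : R)) x) := by
  have hshift : ∀ j ≤ J, X - ((J - j : ℕ) : R[X]) = X + C ((j : R) - J) := by
    intro j hj
    rw [Nat.cast_sub hj, C_sub, C_eq_natCast, C_eq_natCast]
    ring
  calc recurrenceAdjoint J a x
      = ∑ j ∈ range (J + 1), ∑ ℓ ∈ range (j + 1), (j.choose ℓ : R) •
          ((a (J - j)).comp (X + C ((j : R) - J)) * (forwardDiff ^ ℓ) (taylor (-(J : R)) x)) := by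
        rw [recurrenceAdjoint, ← sum_range_reflect]
        refine sum_congr rfl fun j hj => ?_
        have hj : j ≤ J := Nat.lt_succ_iff.1 (mem_range.1 hj)
        have hx : x.comp (X + C ((j : R) - J)) = taylor (j : R) (taylor (-(J : R)) x) := by
          rw [taylor_taylor, ← sub_eq_add_neg, taylor_apply]
        rw [Nat.add_sub_cancel, hshift j hj, hx, taylor_natCast_eq_sum_forwardDiff, mul_sum]
        simp_rw [mul_smul_comm]
    _ = ∑ ℓ ∈ range (J + 1), ∑ j ∈ Icc ℓ J, (j.choose ℓ : R) •
          ((a (J - j)).comp (X + C ((j : R) - J)) * (forwardDiff ^ ℓ) (taylor (-(J : R)) x)) :=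
        sum_comm' fun j ℓ => by simp only [mem_range, mem_Icc]; omega
    _ = _ := by simp_rw [recurrenceAdjointCoeff, sum_mul, smul_mul_assoc]

lemma natDegree_recurrenceAdjoint_le_and_coeff {d s : ℕ}
    (hb : ∀ ℓ ≤ J, (recurrenceAdjointCoeff J a ℓ).natDegree ≤ d + ℓ) {x : R[X]}
    (hx : x.natDegree ≤ s) :
    (recurrenceAdjoint J a x).natDegree ≤ d + s ∧
      (recurrenceAdjoint J a x).coeff (d + s) = indicial J a d s * x.coeff s := by
  set y := taylor (-(J : R)) x
  have hy : y.natDegree ≤ s := (natDegree_taylor x _).trans_le hx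
  have hterm : ∀ ℓ ∈ range (J + 1),
      (recurrenceAdjointCoeff J a ℓ * (forwardDiff ^ ℓ) y).natDegree ≤ d + s ∧
      (recurrenceAdjointCoeff J a ℓ * (forwardDiff ^ ℓ) y).coeff (d + s) =
        (recurrenceAdjointCoeff J a ℓ).coeff (d + ℓ) * s.descFactorial ℓ * x.coeff s := by
    intro ℓ hℓ
    have hbℓ := hb ℓ (Nat.lt_succ_iff.1 (mem_range.1 hℓ))
    rcases le_or_gt ℓ s with hℓs | hℓs
    · obtain ⟨hdeg, hcoeff⟩ := natDegree_forwardDiff_pow_le_and_coeff hy hℓs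
      have hds : d + s = d + ℓ + (s - ℓ) := by omega
      refine ⟨natDegree_mul_le.trans (by omega), ?_⟩
      rw [hds, coeff_mul_add_eq_of_natDegree_le hbℓ hdeg, hcoeff,
        coeff_taylor_of_natDegree_le _ hx, mul_assoc]
    · simp [forwardDiff_pow_eq_zero hy hℓs, Nat.descFactorial_eq_zero_iff_lt.2 hℓs]
  rw [recurrenceAdjoint_eq_sum_forwardDiff]
  refine ⟨natDegree_sum_le_of_forall_le _ _ fun ℓ hℓ => (hterm ℓ hℓ).1, ?_⟩
  rw [finsetSum_coeff, indicial, sum_mul]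
  exact sum_congr rfl fun ℓ hℓ => (hterm ℓ hℓ).2

end RecurrenceAdjoint

section Reflection

variable {R : Type*} [CommRing R]

lemma neg_one_pow_comp (n : ℕ) (q : R[X]) : ((-1 : R[X]) ^ n).comp q = (-1) ^ n := by
  rw [pow_comp, neg_comp, one_comp]

lemma comp_C_sub_X_comp_C_sub_X (p : R[X]) (c : R) : (p.comp (C c - X)).comp (C c - X) = p := by
  rw [comp_assoc, sub_comp, C_comp, X_comp, sub_sub_cancel, comp_X]

def IsPowerPartible (J : ℕ) (a : ℕ → R[X]) (d : ℕ) (γ : R) : Prop :=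
  ∀ i ≤ J / 2,
    (a i).comp (C γ + X) = (-1 : R[X]) ^ d * ((a (J - i)).comp (C γ - X - (J : R[X])))

lemma IsPowerPartible.comp_reflect {J : ℕ} {a : ℕ → R[X]} {d : ℕ} {γ : R}
    (h : IsPowerPartible J a d γ) :
    ∀ i ≤ J, (a (J - i)).comp (C (2 * γ - J) - X) = (-1) ^ d * a i := by
  have hflip : ∀ i ≤ J / 2, a i = (-1) ^ d * (a (J - i)).comp (C (2 * γ - J) - X) := by
    intro i hi
    have hsub : (C γ - X - (J : R[X])).comp (X - C γ) = C (2 * γ - J) - X := by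
      simp only [sub_comp, C_comp, X_comp, natCast_comp, map_sub, map_mul, map_natCast, map_ofNat]
      ring
    have hadd : (C γ + X).comp (X - C γ) = X := by rw [add_comp, C_comp, X_comp, add_sub_cancel]
    have := congrArg (fun q => q.comp (X - C γ)) (h i hi)
    rwa [comp_assoc, hadd, comp_X, mul_comp, neg_one_pow_comp, comp_assoc, hsub] at this
  have hsq : ((-1 : R[X]) ^ d) * (-1) ^ d = 1 := by rw [← mul_pow]; simp
  intro i hi
  rcases le_or_gt i (J / 2) with hiJ | hiJ
  · rw [hflip i hiJ, ← mul_assoc, hsq, one_mul]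
  · have hJi := hflip (J - i) (by omega)
    rw [Nat.sub_sub_self hi] at hJi
    rw [hJi, mul_comp, comp_C_sub_X_comp_C_sub_X, neg_one_pow_comp]

lemma recurrenceAdjoint_comp_reflect {J : ℕ} {a : ℕ → R[X]} {c : R} {d s : ℕ}
    (ha : ∀ i ≤ J, (a (J - i)).comp (C (c - J) - X) = (-1) ^ d * a i) {x : R[X]}
    (hx : x.comp (C (c - J) - X) = (-1) ^ s * x) :
    (recurrenceAdjoint J a x).comp (C c - X) = (-1) ^ (d + s) * recurrenceAdjoint J a x := by
  rw [recurrenceAdjoint, sum_comp, mul_sum, ← sum_range_reflect]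
  refine sum_congr rfl fun i hi => ?_
  have hi : i ≤ J := Nat.lt_succ_iff.1 (mem_range.1 hi)
  have hsub :
      (X - ((J - i : ℕ) : R[X])).comp (C c - X) = (C (c - J) - X).comp (X - (i : R[X])) := by
    simp only [sub_comp, C_comp, X_comp, natCast_comp, Nat.cast_sub hi, map_sub, map_natCast]
    ring
  rw [Nat.add_sub_cancel, mul_comp, comp_assoc, comp_assoc, hsub, ← comp_assoc, ← comp_assoc,
    ha i hi, hx, mul_comp, mul_comp, neg_one_pow_comp, neg_one_pow_comp, pow_add]
  ring

lemma coeff_eq_zero_of_comp_neg_X [IsAddTorsionFree R] {p : R[X]} {n i : ℕ}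
    (hp : p.comp (-X) = (-1) ^ n * p) (hi : i % 2 ≠ n % 2) : p.coeff i = 0 := by
  have hX : (-X : R[X]) = C (-1) * X := by simp
  have hC : (-1 : R[X]) ^ n = C ((-1) ^ n) := by simp
  have h := congrArg (coeff · i) hp
  simp only [hX, hC, comp_C_mul_X_coeff, coeff_C_mul] at h
  rw [neg_one_pow_eq_pow_mod_two i, neg_one_pow_eq_pow_mod_two n] at h
  rcases (by omega : i % 2 = 0 ∧ n % 2 = 1 ∨ i % 2 = 1 ∧ n % 2 = 0) with
    ⟨hi, hn⟩ | ⟨hi, hn⟩ <;>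
    simpa [hi, hn, self_eq_neg, neg_eq_self] using h

lemma coeff_taylor_eq_zero_of_comp_reflect [IsAddTorsionFree R] {γ : R} {p : R[X]} {n i : ℕ}
    (hp : p.comp (C (2 * γ) - X) = (-1) ^ n * p) (hi : i % 2 ≠ n % 2) :
    (taylor γ p).coeff i = 0 := by
  refine coeff_eq_zero_of_comp_neg_X ?_ hi
  calc (taylor γ p).comp (-X) = (p.comp (C (2 * γ) - X)).comp (X + C γ) := by
        rw [taylor_apply, comp_assoc, comp_assoc]
        congr 1
        rw [add_comp, X_comp, C_comp, sub_comp, C_comp, X_comp, C_mul, C_ofNat]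
        ring
    _ = (-1) ^ n * taylor γ p := by rw [hp, mul_comp, neg_one_pow_comp, taylor_apply]

lemma C_mul_X_add_C_pow_comp_reflect (α β : R) (s : ℕ) :
    (C α * (X + C β) ^ s).comp (C (-(2 * β)) - X) = (-1) ^ s * (C α * (X + C β) ^ s) := by
  have hbase : (X + C β).comp (C (-(2 * β)) - X) = -(X + C β) := by
    rw [add_comp, X_comp, C_comp, C_neg, C_mul, C_ofNat]
    ring
  rw [mul_comp, C_comp, pow_comp, hbase, neg_pow]
  ring

lemma natDegree_C_mul_X_add_C_pow_le (α β : R) (s : ℕ) :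
    (C α * (X + C β) ^ s).natDegree ≤ s :=
  (natDegree_C_mul_le _ _).trans (by compute_degree)

lemma coeff_C_mul_X_add_C_pow_self (α β : R) (s : ℕ) :
    (C α * (X + C β) ^ s).coeff s = α := by
  rw [coeff_C_mul, coeff_X_add_C_pow, Nat.sub_self, pow_zero, Nat.choose_self, Nat.cast_one,
    one_mul, mul_one]

end Reflection

section Reduction

variable {K : Type*} [Field K] (γ : K) (d : ℕ) (Q : ℕ → K[X])

noncomputable def reductionSpan (m : ℕ) : Submodule K K[X] :=
  Submodule.span K ((fun i => (X - C γ) ^ i) '' ↑((range d).filter (fun i => i % 2 = m % 2))) ⊔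
    Submodule.span K
      (Q '' ↑((range (m + 1)).filter (fun j => d + j ≤ m ∧ (d + j) % 2 = m % 2)))

variable {γ d Q}

lemma reductionSpan_mono {m m' : ℕ} (hm : m ≤ m') (hpar : m % 2 = m' % 2) :
    reductionSpan γ d Q m ≤ reductionSpan γ d Q m' := by
  refine sup_le_sup (Submodule.span_mono (Set.image_mono ?_))
    (Submodule.span_mono (Set.image_mono ?_))
  · intro i
    simp [hpar]
  · intro j hj
    simp only [coe_filter, mem_range, Set.mem_ofPred_eq] at hj ⊢
    omega

lemma pow_sub_C_mem_reductionSpan_of_lt {i m : ℕ} (hi : i < d) (hpar : i % 2 = m % 2) :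
    (X - C γ) ^ i ∈ reductionSpan γ d Q m :=
  Submodule.mem_sup_left (Submodule.subset_span ⟨i, by simp [hi, hpar], rfl⟩)

lemma apply_mem_reductionSpan (j : ℕ) : Q j ∈ reductionSpan γ d Q (d + j) :=
  Submodule.mem_sup_right (Submodule.subset_span ⟨j, by simp, rfl⟩)

lemma exists_eq_of_mem_reductionSpan {m : ℕ} {p : K[X]} (h : p ∈ reductionSpan γ d Q m) :
    ∃ u v : ℕ → K, p =
      (∑ i ∈ (range d).filter (fun i => i % 2 = m % 2), C (u i) * (X - C γ) ^ i) +
        ∑ j ∈ (range (m + 1)).filter (fun j => d + j ≤ m ∧ (d + j) % 2 = m % 2),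
          C (v j) * Q j := by
  obtain ⟨y, hy, z, hz, rfl⟩ := Submodule.mem_sup.1 h
  obtain ⟨u, rfl⟩ := (Submodule.mem_span_image_finset_iff_exists_fun' K).1 hy
  obtain ⟨v, rfl⟩ := (Submodule.mem_span_image_finset_iff_exists_fun' K).1 hz
  exact ⟨u, v, by simp only [C_mul']⟩

variable [CharZero K]

lemma mem_span_pow_sub_C_of_comp_reflect {m : ℕ} {r : K[X]} (hdeg : r.degree < m)
    (hr : r.comp (C (2 * γ) - X) = (-1) ^ m * r) :
    r ∈ Submodule.span K ((fun i => (X - C γ) ^ i) '' {i | i < m ∧ i % 2 = m % 2}) := by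
  rw [← sum_taylor_eq r γ, Polynomial.sum_def]
  refine Submodule.sum_mem _ fun i hi => ?_
  rw [C_mul']
  refine Submodule.smul_mem _ _ (Submodule.subset_span ⟨i, ⟨?_, ?_⟩, rfl⟩)
  · by_contra! hmi
    exact mem_support_iff.1 hi (coeff_eq_zero_of_degree_lt
      ((degree_taylor r γ).trans_lt (hdeg.trans_le (by exact_mod_cast hmi))))
  · by_contra hpar
    exact mem_support_iff.1 hi (coeff_taylor_eq_zero_of_comp_reflect hr hpar)

theorem pow_sub_C_mem_reductionSpan (hdeg : ∀ j, (Q j).natDegree ≤ d + j)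
    (hlead : ∀ j, (Q j).coeff (d + j) ≠ 0)
    (hsymm : ∀ j, (Q j).comp (C (2 * γ) - X) = (-1) ^ (d + j) * Q j) (m : ℕ) :
    (X - C γ) ^ m ∈ reductionSpan γ d Q m := by
  induction m using Nat.strong_induction_on with
  | _ m ih =>
  rcases lt_or_ge m d with hm | hm
  · exact pow_sub_C_mem_reductionSpan_of_lt hm rfl
  obtain ⟨j, rfl⟩ := Nat.exists_eq_add_of_le hm
  set c := ((Q j).coeff (d + j))⁻¹
  set r := (X - C γ) ^ (d + j) - C c * Q j
  have hpow_deg : ((X - C γ) ^ (d + j)).natDegree = d + j := by simp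
  have hpow_lead : ((X - C γ) ^ (d + j)).coeff (d + j) = 1 := by
    simpa [hpow_deg] using ((monic_X_sub_C γ).pow (d + j)).coeff_natDegree
  have hr_deg : r.degree < ↑(d + j) := by
    refine (degree_lt_iff_coeff_zero _ _).2 fun k hk => ?_
    rcases hk.eq_or_lt with rfl | hk
    · simp [r, c, hpow_lead, hlead j]
    · rw [coeff_eq_zero_of_natDegree_lt ((natDegree_sub_le _ _).trans_lt ?_)]
      exact max_lt (hpow_deg.trans_lt hk)
        ((natDegree_C_mul_le _ _).trans_lt ((hdeg j).trans_lt hk))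
  have hr_symm : r.comp (C (2 * γ) - X) = (-1) ^ (d + j) * r := by
    have hbase : (X - C γ).comp (C (2 * γ) - X) = -(X - C γ) := by
      rw [sub_comp, X_comp, C_comp, C_mul, C_ofNat]
      ring
    rw [sub_comp, mul_comp, C_comp, pow_comp, hbase, hsymm, neg_pow]
    ring
  have hr_mem : r ∈ reductionSpan γ d Q (d + j) := by
    refine Submodule.span_le.2 ?_ (mem_span_pow_sub_C_of_comp_reflect hr_deg hr_symm)
    rintro _ ⟨i, ⟨hi, hpar⟩, rfl⟩
    exact reductionSpan_mono hi.le hpar (ih i hi)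
  rw [← sub_add_cancel ((X - C γ) ^ (d + j)) (C c * Q j)]
  exact add_mem hr_mem (by rw [C_mul']; exact Submodule.smul_mem _ _ (apply_mem_reductionSpan j))

end Reduction

end Polynomial

theorem power_partible_reduction_explicit_general {K : Type*} [Field K] [CharZero K]
    (J : ℕ) (a : ℕ → Polynomial K)
    (b : ℕ → Polynomial K)
    (hb : ∀ ℓ, b ℓ = ∑ j ∈ Finset.Icc ℓ J,
      (j.choose ℓ : K) • ((a (J - j)).comp (Polynomial.X + Polynomial.C ((j : K) - (J : K)))))
    (d : ℕ)
    (hd_le : ∀ ℓ ∈ Finset.range (J + 1), (b ℓ).degree ≤ ((d + ℓ : ℕ) : WithBot ℕ))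
    (f : ℕ → K)
    (hf : ∀ s : ℕ, f s = ∑ ℓ ∈ Finset.range (J + 1),
      (b ℓ).coeff (d + ℓ) * (s.descFactorial ℓ : K))
    (hnondeg : ∀ s : ℕ, f s ≠ 0)
    (γ : K)
    (hsym : ∀ i ≤ J / 2,
      (a i).comp (Polynomial.C γ + Polynomial.X)
        = (-1 : Polynomial K) ^ d *
          ((a (J - i)).comp (Polynomial.C γ - Polynomial.X - (J : Polynomial K))))
    (Lstar : Polynomial K → Polynomial K)
    (hLstar : ∀ x : Polynomial K, Lstar x = ∑ i ∈ Finset.range (J + 1),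
      ((a i).comp (Polynomial.X - (i : Polynomial K))) * (x.comp (Polynomial.X - (i : Polynomial K))))
    (α : ℕ → K) (hα : ∀ s, α s ≠ 0)
    (xs : ℕ → Polynomial K)
    (hxs : ∀ s : ℕ, xs s = Polynomial.C (α s) *
      (Polynomial.X - Polynomial.C γ + Polynomial.C ((J : K) / 2)) ^ s) :
    ∀ m : ℕ, 0 < m → ∃ u v : ℕ → K,
      (Polynomial.X - Polynomial.C γ) ^ m
        = (∑ i ∈ (Finset.range d).filter (fun i => i % 2 = m % 2),
            Polynomial.C (u i) * (Polynomial.X - Polynomial.C γ) ^ i)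
          + ∑ j ∈ (Finset.range (m + 1)).filter
              (fun j => d + j ≤ m ∧ (d + j) % 2 = m % 2),
            Polynomial.C (v j) * Lstar (xs j) := by
  obtain rfl : Lstar = recurrenceAdjoint J a := funext hLstar
  obtain rfl : b = recurrenceAdjointCoeff J a := funext hb
  obtain rfl : f = indicial J a d := funext hf
  have hb_deg : ∀ ℓ ≤ J, (recurrenceAdjointCoeff J a ℓ).natDegree ≤ d + ℓ := fun ℓ hℓ =>
    natDegree_le_iff_degree_le.2 (hd_le ℓ (mem_range.2 (Nat.lt_succ_of_le hℓ)))
  obtain rfl : xs = fun s => C (α s) * (X + C ((J : K) / 2 - γ)) ^ s :=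
    funext fun s => by rw [hxs, C_sub]; ring
  have hx_symm : ∀ s, (C (α s) * (X + C ((J : K) / 2 - γ)) ^ s).comp (C (2 * γ - J) - X) =
      (-1) ^ s * (C (α s) * (X + C ((J : K) / 2 - γ)) ^ s) := fun s => by
    rw [show (2 * γ - J : K) = -(2 * ((J : K) / 2 - γ)) by ring]
    exact C_mul_X_add_C_pow_comp_reflect (α s) ((J : K) / 2 - γ) s
  have hQ := fun j => natDegree_recurrenceAdjoint_le_and_coeff J a hb_deg
    (natDegree_C_mul_X_add_C_pow_le (α j) ((J : K) / 2 - γ) j)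
  intro m _
  refine exists_eq_of_mem_reductionSpan (pow_sub_C_mem_reductionSpan (fun j => (hQ j).1)
    (fun j => ?_) (fun j => recurrenceAdjoint_comp_reflect
      (IsPowerPartible.comp_reflect hsym) (hx_symm j)) m)
  rw [(hQ j).2, coeff_C_mul_X_add_C_pow_self]
  exact mul_ne_zero (hnondeg j) (hα j)

theorem power_partible_reduction_explicit {K : Type*} [Field K] [CharZero K]
    (J : ℕ) (a : ℕ → Polynomial K) (hJ : a J ≠ 0)
    (b : ℕ → Polynomial K)
    (hb : ∀ ℓ, b ℓ = ∑ j ∈ Finset.Icc ℓ J,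
      (j.choose ℓ : K) • ((a (J - j)).comp (Polynomial.X + Polynomial.C ((j : K) - (J : K)))))
    (d : ℕ)
    (hd_le : ∀ ℓ ∈ Finset.range (J + 1), (b ℓ).degree ≤ ((d + ℓ : ℕ) : WithBot ℕ))
    (hd_eq : ∃ ℓ ∈ Finset.range (J + 1), (b ℓ).degree = ((d + ℓ : ℕ) : WithBot ℕ))
    (f : ℕ → K)
    (hf : ∀ s : ℕ, f s = ∑ ℓ ∈ Finset.range (J + 1),
      (b ℓ).coeff (d + ℓ) * (s.descFactorial ℓ : K))
    (hnondeg : ∀ s : ℕ, f s ≠ 0)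
    (γ : K)
    (hsym : ∀ i ≤ J / 2,
      (a i).comp (Polynomial.C γ + Polynomial.X)
        = (-1 : Polynomial K) ^ d *
          ((a (J - i)).comp (Polynomial.C γ - Polynomial.X - (J : Polynomial K))))
    (Lstar : Polynomial K → Polynomial K)
    (hLstar : ∀ x : Polynomial K, Lstar x = ∑ i ∈ Finset.range (J + 1),
      ((a i).comp (Polynomial.X - (i : Polynomial K))) * (x.comp (Polynomial.X - (i : Polynomial K))))
    (α : ℕ → K) (hα : ∀ s, α s ≠ 0)
    (xs : ℕ → Polynomial K)
    (hxs : ∀ s : ℕ, xs s = Polynomial.C (α s) *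
      (Polynomial.X - Polynomial.C γ + Polynomial.C ((J : K) / 2)) ^ s) :
    ∀ m : ℕ, 0 < m → ∃ u v : ℕ → K,
      (Polynomial.X - Polynomial.C γ) ^ m
        = (∑ i ∈ (Finset.range d).filter (fun i => i % 2 = m % 2),
            Polynomial.C (u i) * (Polynomial.X - Polynomial.C γ) ^ i)
          + ∑ j ∈ (Finset.range (m + 1)).filter
              (fun j => d + j ≤ m ∧ (d + j) % 2 = m % 2),
            Polynomial.C (v j) * Lstar (xs j) :=
  power_partible_reduction_explicit_general J a b hb d hd_le f hf hnondeg γ hsym Lstar hLstar α hα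
    xs hxs
end

section
/- For every polynomial x with rational coefficients and every integer n ≥ 1, ∑_{k=0}^{n−1} [ k^3 x(k−2) − (2k+1)(17k^2+17k+5) x(k−1) + (k+1)^3 x(k) ] · A_k = n^3 · ( x(n−1) A_{n−1} − x(n−2) A_n ), where x is evaluated at the indicated integers (which may be negative). -/
open Finset Polynomial

/-!
The summand is `L*(x)(k) · A_k`, with `L*` the adjoint of Apéry's operator `L`. Summation by
parts (the discrete Lagrange identity) turns `∑ L*(x)(k) A_k` into a boundary term plus
`∑ x(k-1) · (L A)(k-1)`, and the latter vanishes by Apéry's recurrence `L A = 0`. The recurrence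
itself is proved by creative telescoping: applied to the summand `F(n, k)` of `A_n`, the operator
`L` gives `G(n, k+1) - G(n, k)` for an explicit hypergeometric certificate `G`, and summing over `k`
leaves nothing.
-/

/-- The Apéry numbers `A n = ∑_{k=0}^n (n choose k)^2 ((n+k) choose k)^2`. -/
def apery (n : ℕ) : ℤ :=
  ∑ k ∈ Finset.range (n + 1), ((n.choose k : ℤ)) ^ 2 * (((n + k).choose k : ℤ)) ^ 2

theorem sum_range_adjoint_mul_of_recurrence {R : Type*} [CommRing R] (a b c : ℕ → R)
    (y : ℤ → R) (hc : c 0 = 0)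
    (hrec : ∀ n, c (n + 1) * a (n + 1) + c n * a (n - 1) = b n * a n) (n : ℕ) :
    ∑ k ∈ range n, (c k * y (k - 2) - b k * y (k - 1) + c (k + 1) * y k) * a k
      = c n * (y (n - 1) * a (n - 1) - y (n - 2) * a n) := by
  induction n with
  | zero => simp [hc]
  | succ n ih =>
    rw [sum_range_succ, ih, Nat.add_sub_cancel]
    push_cast
    rw [add_sub_cancel_right, show (n : ℤ) + 1 - 2 = n - 1 by ring]
    linear_combination y (n - 1) * hrec n

section Binomial

variable {K : Type*} [Field K] [CharZero K]

theorem Nat.cast_choose_succ_succ (n k : ℕ) :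
    ((n + 1).choose (k + 1) : K) = (n + 1) * n.choose k / (k + 1) := by
  rw [eq_div_iff (Nat.cast_add_one_ne_zero _)]
  exact_mod_cast (Nat.add_one_mul_choose_eq n k).symm

theorem Nat.cast_choose_succ_right (n k : ℕ) :
    (n.choose (k + 1) : K) = (n - k) * n.choose k / (k + 1) := by
  rw [eq_div_iff (Nat.cast_add_one_ne_zero _)]
  rcases le_or_gt k n with h | h
  · rw [mul_comm _ (n.choose k : K), ← Nat.cast_sub h]
    exact_mod_cast Nat.choose_succ_right_eq n k
  · simp [Nat.choose_eq_zero_of_lt h, Nat.choose_eq_zero_of_lt (h.trans (Nat.lt_succ_self k))]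

theorem Nat.cast_choose_eq_succ_left (n k : ℕ) :
    (n.choose k : K) = (n + 1 - k) * (n + 1).choose k / (n + 1) := by
  rw [eq_div_iff (Nat.cast_add_one_ne_zero _)]
  rcases le_or_gt k (n + 1) with h | h
  · rw [mul_comm _ ((n + 1).choose k : K), show (n + 1 - k : K) = ((n + 1 - k : ℕ) : K) by
      push_cast [h]; ring]
    exact_mod_cast Nat.choose_mul_succ_eq n k
  · simp [Nat.choose_eq_zero_of_lt h, Nat.choose_eq_zero_of_lt (Nat.lt_of_succ_lt h)]

end Binomial

def aperyTerm (n k : ℕ) : ℚ := (n.choose k : ℚ) ^ 2 * ((n + k).choose k : ℚ) ^ 2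

/-- Zeilberger's certificate for `aperyTerm`, shifted by one in `k` so that `aperyCert m 0 = 0`. -/
def aperyCert (m : ℕ) : ℕ → ℚ
  | 0 => 0
  | j + 1 => 4 * (2 * m + 3) * (j * (2 * j + 1) - (2 * m + 3) ^ 2) * aperyTerm (m + 1) j

theorem aperyTerm_recurrence (m k : ℕ) :
    ((m : ℚ) + 2) ^ 3 * aperyTerm (m + 2) k
        - (2 * (m : ℚ) + 3) * (17 * (m : ℚ) ^ 2 + 51 * m + 39) * aperyTerm (m + 1) k
        + ((m : ℚ) + 1) ^ 3 * aperyTerm m k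
      = aperyCert m (k + 1) - aperyCert m k := by
  cases k with
  | zero => simp [aperyTerm, aperyCert]; ring
  | succ j =>
    -- Every binomial coefficient is a rational multiple of `(m+1).choose j` or `(m+1+j).choose j`
    -- with a nonvanishing denominator, so the boundary `j = m + 1` needs no separate case.
    have e1 : ((m + 2).choose (j + 1) : ℚ) = (m + 2) * (m + 1).choose j / (j + 1) := by
      rw [Nat.cast_choose_succ_succ]; push_cast; ring
    have e2 : ((m + 1).choose (j + 1) : ℚ) = (m + 1 - j) * (m + 1).choose j / (j + 1) := by
      rw [Nat.cast_choose_succ_right]; push_cast; ring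
    have e3 : (m.choose (j + 1) : ℚ) = (m - j) * (m + 1).choose (j + 1) / (m + 1) := by
      rw [Nat.cast_choose_eq_succ_left]; push_cast; ring
    have e4 : ((m + 1 + (j + 1)).choose (j + 1) : ℚ)
        = (m + j + 2) * (m + 1 + j).choose j / (j + 1) := by
      rw [show m + 1 + (j + 1) = m + 1 + j + 1 by omega, Nat.cast_choose_succ_succ]; push_cast; ring
    have e5 : ((m + 2 + (j + 1)).choose (j + 1) : ℚ)
        = (m + j + 3) * (m + 1 + (j + 1)).choose (j + 1) / (m + 2) := by
      rw [Nat.cast_choose_eq_succ_left (m + 1 + (j + 1)),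
        show m + 1 + (j + 1) + 1 = m + 2 + (j + 1) by omega]
      push_cast
      field_simp
      ring
    have e6 : ((m + (j + 1)).choose (j + 1) : ℚ)
        = (m + 1) * (m + 1 + (j + 1)).choose (j + 1) / (m + j + 2) := by
      rw [Nat.cast_choose_eq_succ_left (m + (j + 1)),
        show m + (j + 1) + 1 = m + 1 + (j + 1) by omega]
      push_cast
      ring
    simp only [aperyTerm, aperyCert]
    rw [e5, e6, e4, e3, e2, e1]
    push_cast
    field_simp
    ring

theorem apery_eq_sum_aperyTerm {n N : ℕ} (h : n < N) :
    (apery n : ℚ) = ∑ k ∈ range N, aperyTerm n k := by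
  rw [← sum_range_add_sum_Ico _ h]
  have htail : ∑ k ∈ Ico (n + 1) N, aperyTerm n k = 0 :=
    sum_eq_zero fun k hk => by
      simp [aperyTerm, Nat.choose_eq_zero_of_lt (Nat.lt_of_succ_le (mem_Ico.1 hk).1)]
  rw [htail, add_zero, apery]
  push_cast
  rfl

theorem apery_recurrence (n : ℕ) :
    ((n : ℤ) + 2) ^ 3 * apery (n + 2) + ((n : ℤ) + 1) ^ 3 * apery n
      = (2 * n + 3) * (17 * n ^ 2 + 51 * n + 39) * apery (n + 1) := by
  have hsum := sum_range_sub (aperyCert n) (n + 3)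
  have hlast : aperyCert n (n + 3) = 0 := by simp [aperyCert, aperyTerm]
  rw [← sum_congr rfl fun k _ => aperyTerm_recurrence n k, sum_add_distrib, sum_sub_distrib,
    ← mul_sum, ← mul_sum, ← mul_sum, ← apery_eq_sum_aperyTerm (by omega),
    ← apery_eq_sum_aperyTerm (by omega), ← apery_eq_sum_aperyTerm (by omega), hlast, aperyCert,
    sub_zero] at hsum
  have hQ : ((n : ℚ) + 2) ^ 3 * apery (n + 2) + ((n : ℚ) + 1) ^ 3 * apery n
      = (2 * n + 3) * (17 * n ^ 2 + 51 * n + 39) * apery (n + 1) := by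
    linear_combination hsum
  exact_mod_cast hQ

/-- `apery (0 - 1) = apery 0` is harmless here, as its coefficient vanishes at `n = 0`. -/
theorem apery_recurrence_pred (n : ℕ) :
    ((n : ℤ) + 1) ^ 3 * apery (n + 1) + (n : ℤ) ^ 3 * apery (n - 1)
      = (2 * n + 1) * (17 * n ^ 2 + 17 * n + 5) * apery n := by
  cases n with
  | zero => decide
  | succ m =>
    push_cast
    linear_combination apery_recurrence m

theorem apery_telescoped_sum_general (x : Polynomial ℚ) (n : ℕ) :
    ∑ k ∈ Finset.range n,
      ((k : ℚ) ^ 3 * x.eval ((k : ℚ) - 2)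
        - (2 * (k : ℚ) + 1) * (17 * (k : ℚ) ^ 2 + 17 * k + 5) * x.eval ((k : ℚ) - 1)
        + ((k : ℚ) + 1) ^ 3 * x.eval (k : ℚ)) * (apery k : ℚ)
      = (n : ℚ) ^ 3 *
          (x.eval ((n : ℚ) - 1) * (apery (n - 1) : ℚ) - x.eval ((n : ℚ) - 2) * (apery n : ℚ)) := by
  have h := sum_range_adjoint_mul_of_recurrence (fun k => (apery k : ℚ))
    (fun k => (2 * (k : ℚ) + 1) * (17 * (k : ℚ) ^ 2 + 17 * k + 5)) (fun k => (k : ℚ) ^ 3)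
    (fun j => x.eval (j : ℚ)) (by simp) (fun n => by exact_mod_cast apery_recurrence_pred n) n
  exact_mod_cast h

theorem apery_telescoped_sum (x : Polynomial ℚ) (n : ℕ) (hn : 1 ≤ n) :
    ∑ k ∈ Finset.range n,
      ((k : ℚ) ^ 3 * x.eval ((k : ℚ) - 2)
        - (2 * (k : ℚ) + 1) * (17 * (k : ℚ) ^ 2 + 17 * k + 5) * x.eval ((k : ℚ) - 1)
        + ((k : ℚ) + 1) ^ 3 * x.eval (k : ℚ)) * (apery k : ℚ)
      = (n : ℚ) ^ 3 *
          (x.eval ((n : ℚ) - 1) * (apery (n - 1) : ℚ) - x.eval ((n : ℚ) - 2) * (apery n : ℚ)) :=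
  apery_telescoped_sum_general x n
end

section
/- Fix z ∈ ℤ. For every polynomial x with rational coefficients and every integer n ≥ 1, ∑_{k=0}^{n−1} [ k x(k−2) − (2k+1)(2z+1) x(k−1) + (k+1) x(k) ] · D_k(z) = n · ( x(n−1) D_{n−1}(z) − x(n−2) D_n(z) ), where x is evaluated at the indicated integers (which may be negative). -/
open Finset Polynomial

/-- The central Delannoy polynomials `D k (z) = ∑_{i=0}^k (k choose i) ((k+i) choose i) z^i`. -/
def delannoy (k : ℕ) (z : ℤ) : ℤ :=
  ∑ i ∈ Finset.range (k + 1), (k.choose i : ℤ) * ((k + i).choose i : ℤ) * z ^ i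

/-!
The sum telescopes: adding the `k`-th term to `n (x(n-1) D_{n-1} - x(n-2) D_n)` gives the
`(n+1)`-st right-hand side plus `x(n-1)` times `(n+1) D_{n+1} - (2n+1)(2z+1) D_n + n D_{n-1}`,
which vanishes by the three-term recurrence of the Delannoy polynomials. The recurrence is
checked coefficientwise: after multiplying by `(i+1)^2 (k+1+i)`, each coefficient
`binom(k,i) binom(k+i,i)` involved is a polynomial multiple of the single coefficient of
`D_{k+1}` at `z^i`, and what remains is a polynomial identity in `k` and `i`.
-/

def delannoyCoeff (n i : ℕ) : ℤ := (n.choose i : ℤ) * ((n + i).choose i : ℤ)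

namespace delannoyCoeff

theorem eq_zero_of_lt {n i : ℕ} (h : n < i) : delannoyCoeff n i = 0 := by
  simp [delannoyCoeff, Nat.choose_eq_zero_of_lt h]

theorem succ_left (n i : ℕ) :
    ((n : ℤ) + 1 - i) * delannoyCoeff (n + 1) i = (n + 1 + i) * delannoyCoeff n i := by
  rcases le_or_gt i (n + 1) with hi | hi
  · have h₁ := Nat.choose_mul_succ_eq n i
    have h₂ := Nat.choose_mul_succ_eq (n + i) i
    rw [show n + i + 1 - i = n + 1 by omega, show n + i + 1 = n + 1 + i by omega] at h₂
    zify [hi] at h₁ h₂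
    refine mul_left_cancel₀ (show (n : ℤ) + 1 ≠ 0 by positivity) ?_
    unfold delannoyCoeff
    linear_combination -((n : ℤ) + 1 - i) * ((n + 1).choose i : ℤ) * h₂
      - ((n : ℤ) + 1 + i) * ((n + i).choose i : ℤ) * h₁
  · simp [eq_zero_of_lt hi, eq_zero_of_lt (show n < i by omega)]

theorem succ_right (n i : ℕ) :
    ((i : ℤ) + 1) ^ 2 * delannoyCoeff n (i + 1) = (n - i) * (n + i + 1) * delannoyCoeff n i := by
  rcases le_or_gt i n with hi | hi
  · have h₁ := Nat.choose_succ_right_eq n i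
    have h₂ := Nat.add_one_mul_choose_eq (n + i) i
    rw [show n + i + 1 = n + (i + 1) by omega] at h₂
    zify [hi] at h₁ h₂
    unfold delannoyCoeff
    linear_combination ((i : ℤ) + 1) * ((n + (i + 1)).choose (i + 1) : ℤ) * h₁
      - ((n : ℤ) - i) * (n.choose i : ℤ) * h₂
  · simp [eq_zero_of_lt hi, eq_zero_of_lt (show n < i + 1 by omega)]

theorem succ_succ (n i : ℕ) :
    ((i : ℤ) + 1) ^ 2 * delannoyCoeff (n + 1) (i + 1)
      = (n + 1 + i) * (n + 2 + i) * delannoyCoeff n i := by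
  have h₁ := Nat.add_one_mul_choose_eq n i
  have h₂ := Nat.add_one_mul_choose_eq (n + 1 + i) i
  have h₃ := Nat.choose_mul_succ_eq (n + i) i
  rw [show n + 1 + i + 1 = n + 1 + (i + 1) by omega] at h₂
  rw [show n + i + 1 - i = n + 1 by omega, show n + i + 1 = n + 1 + i by omega] at h₃
  zify at h₁ h₂ h₃
  unfold delannoyCoeff
  linear_combination -((i : ℤ) + 1) * ((n + 1 + (i + 1)).choose (i + 1) : ℤ) * h₁
    - ((n : ℤ) + 1) * (n.choose i : ℤ) * h₂ - ((n : ℤ) + 2 + i) * (n.choose i : ℤ) * h₃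

theorem recurrence (k i : ℕ) :
    ((k : ℤ) + 2) * delannoyCoeff (k + 2) (i + 1) + ((k : ℤ) + 1) * delannoyCoeff k (i + 1)
      = (2 * k + 3) * (delannoyCoeff (k + 1) (i + 1) + 2 * delannoyCoeff (k + 1) i) := by
  have h₀ := succ_left k i
  have h₁ := succ_right k i
  have h₂ := succ_right (k + 1) i
  have h₃ := succ_succ (k + 1) i
  push_cast at h₂ h₃
  refine mul_left_cancel₀ (show ((i : ℤ) + 1) ^ 2 * (k + 1 + i) ≠ 0 by positivity) ?_
  linear_combination ((k : ℤ) + 2) * (k + 1 + i) * h₃ + ((k : ℤ) + 1) * (k + 1 + i) * h₁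
    - (2 * (k : ℤ) + 3) * (k + 1 + i) * h₂ - ((k : ℤ) + 1) * (k - i) * (k + i + 1) * h₀

end delannoyCoeff

theorem delannoy_eq_sum_range {k N : ℕ} (h : k < N) (z : ℤ) :
    delannoy k z = ∑ i ∈ range N, delannoyCoeff k i * z ^ i :=
  sum_subset (range_subset_range.2 h) fun i _ hi => by
    show delannoyCoeff k i * z ^ i = 0
    rw [delannoyCoeff.eq_zero_of_lt (by simpa using hi), zero_mul]

theorem delannoy_recurrence (k : ℕ) (z : ℤ) :
    ((k : ℤ) + 2) * delannoy (k + 2) z + ((k : ℤ) + 1) * delannoy k z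
      = (2 * k + 3) * (2 * z + 1) * delannoy (k + 1) z := by
  have split (n : ℕ) (hn : n < k + 3) : delannoy n z
      = ∑ i ∈ range (k + 2), delannoyCoeff n (i + 1) * z ^ (i + 1) + 1 := by
    rw [delannoy_eq_sum_range hn, sum_range_succ']
    simp [delannoyCoeff]
  have shift : z * delannoy (k + 1) z
      = ∑ i ∈ range (k + 2), delannoyCoeff (k + 1) i * z ^ (i + 1) := by
    rw [delannoy_eq_sum_range (by omega : k + 1 < k + 2), mul_sum]
    exact sum_congr rfl fun i _ => by ring
  have termwise := sum_congr rfl fun i (_ : i ∈ range (k + 2)) =>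
    congrArg (· * z ^ (i + 1)) (delannoyCoeff.recurrence k i)
  simp only [add_mul, mul_add, sum_add_distrib, mul_assoc, ← mul_sum] at termwise
  linear_combination termwise + ((k : ℤ) + 2) * split (k + 2) (by omega)
    + ((k : ℤ) + 1) * split k (by omega) - (2 * (k : ℤ) + 3) * split (k + 1) (by omega)
    - 2 * (2 * (k : ℤ) + 3) * shift

-- At `k = 0` the truncated `k - 1` is harmless: its coefficient `k` vanishes.
theorem succ_mul_delannoy_succ (k : ℕ) (z : ℤ) :
    ((k : ℤ) + 1) * delannoy (k + 1) z
      = (2 * k + 1) * (2 * z + 1) * delannoy k z - k * delannoy (k - 1) z := by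
  rcases k with _ | k
  · simp [delannoy, sum_range_succ, add_comm]
  · push_cast
    linear_combination delannoy_recurrence k z

theorem delannoy_telescoped_sum_general (z : ℤ) (x : Polynomial ℚ) (n : ℕ) :
    ∑ k ∈ Finset.range n,
      ((k : ℚ) * x.eval ((k : ℚ) - 2)
        - (2 * (k : ℚ) + 1) * (2 * (z : ℚ) + 1) * x.eval ((k : ℚ) - 1)
        + ((k : ℚ) + 1) * x.eval (k : ℚ)) * (delannoy k z : ℚ)
      = (n : ℚ) *
          (x.eval ((n : ℚ) - 1) * (delannoy (n - 1) z : ℚ)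
            - x.eval ((n : ℚ) - 2) * (delannoy n z : ℚ)) := by
  induction n with
  | zero => simp
  | succ n ih =>
    have step : ((n : ℚ) + 1) * delannoy (n + 1) z
        = (2 * n + 1) * (2 * z + 1) * delannoy n z - n * delannoy (n - 1) z := by
      exact_mod_cast succ_mul_delannoy_succ n z
    rw [sum_range_succ, ih, Nat.add_sub_cancel]
    push_cast
    rw [add_sub_cancel_right, show (n : ℚ) + 1 - 2 = n - 1 by ring]
    linear_combination x.eval ((n : ℚ) - 1) * step

theorem delannoy_telescoped_sum (z : ℤ) (x : Polynomial ℚ) (n : ℕ) (hn : 1 ≤ n) :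
    ∑ k ∈ Finset.range n,
      ((k : ℚ) * x.eval ((k : ℚ) - 2)
        - (2 * (k : ℚ) + 1) * (2 * (z : ℚ) + 1) * x.eval ((k : ℚ) - 1)
        + ((k : ℚ) + 1) * x.eval (k : ℚ)) * (delannoy k z : ℚ)
      = (n : ℚ) *
          (x.eval ((n : ℚ) - 1) * (delannoy (n - 1) z : ℚ)
            - x.eval ((n : ℚ) - 2) * (delannoy n z : ℚ)) :=
  delannoy_telescoped_sum_general z x n
end
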